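/- Let T > 0 and 0 < a ≤ b, let l(t,x) = λ(x² + t²(t−T)²), and let A, B, G, D, Φ₁, Φ be the coefficient functions defined from l as in the context. Define F₄ = −( (G − Φ₁)ₓ Φ )ₓ − ( (A − Φ)( B − (G − Φ₁)ₓ ) )ₓ + Φ_tt + ( (G − Φ₁) Φ )ₓₓ + Φₓₓₓₓ + ( (A − Φ) Φ₁ )ₓₓ − ( (A − Φ) D )ₓₓₓ + 2 (A − Φ) Φ + 2 ( l_t (A − Φ) )_t. Then there exist constants C > 0 and λ₀ > 0, depending only on a, b, T, such that for all λ ≥ λ₀ and all (t,x) ∈ [0,T] × [a,b]: F₄(t,x) ≥ C λ⁷. -/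

import Mathlib

/-!
Every derivative of `l` that enters `F₄` is an explicit polynomial: `l_x = 2λx`, `l_xx = 2λ`,
the higher `x`-derivatives vanish, and `l_t`, `l_tt` are `λ` times the first two derivatives of
`t²(t−T)²`. Hence `F₄` is a polynomial of degree 7 in `λ` with leading coefficient `1536 x⁶`,
and `F₄ = 1536 λ⁷ x⁶ + λ⁶ R(λ⁻¹, t, x)` with `R = F4Remainder T` a polynomial. On the compact box
`[0,1] × [0,T] × [a,b]` the continuous `R` is bounded by some `M`, so
`F₄ ≥ λ⁶ (1536 a⁶ λ − M) ≥ 768 a⁶ λ⁷` as soon as `λ ≥ max 1 (M / (768 a⁶))`.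
-/

/-- Partial derivative in the time variable (first argument). -/
noncomputable def pt (y : ℝ → ℝ → ℝ) : ℝ → ℝ → ℝ := fun t x => deriv (fun s => y s x) t

/-- Partial derivative in the space variable (second argument). -/
noncomputable def px (y : ℝ → ℝ → ℝ) : ℝ → ℝ → ℝ := fun t x => deriv (fun z => y t z) x

/-- The Carleman weight exponent `l(t,x) = λ (x² + t² (t−T)²)`. -/
noncomputable def lw (lam T : ℝ) : ℝ → ℝ → ℝ := fun t x => lam * (x^2 + t^2 * (t - T)^2)

noncomputable def l_t (lam T : ℝ) : ℝ → ℝ → ℝ := pt (lw lam T)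
noncomputable def l_tt (lam T : ℝ) : ℝ → ℝ → ℝ := pt (pt (lw lam T))
noncomputable def l_x (lam T : ℝ) : ℝ → ℝ → ℝ := px (lw lam T)
noncomputable def l_xx (lam T : ℝ) : ℝ → ℝ → ℝ := px (px (lw lam T))
noncomputable def l_xxx (lam T : ℝ) : ℝ → ℝ → ℝ := px (px (px (lw lam T)))
noncomputable def l_xxxx (lam T : ℝ) : ℝ → ℝ → ℝ := px (px (px (px (lw lam T))))

/-- `A = l_x⁴ + 4 l_x l_xxx − l_xxxx − 6 l_x² l_xx + 3 l_xx² + l_t² − l_tt`. -/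
noncomputable def Aco (lam T : ℝ) : ℝ → ℝ → ℝ := fun t x =>
  (l_x lam T t x)^4 + 4 * l_x lam T t x * l_xxx lam T t x - l_xxxx lam T t x
    - 6 * (l_x lam T t x)^2 * l_xx lam T t x + 3 * (l_xx lam T t x)^2
    + (l_t lam T t x)^2 - l_tt lam T t x

/-- `G = 6 l_x² − 6 l_xx`. -/
noncomputable def Gco (lam T : ℝ) : ℝ → ℝ → ℝ := fun t x =>
  6 * (l_x lam T t x)^2 - 6 * l_xx lam T t x

/-- `B = 12 l_x l_xx − 4 l_x³ − 4 l_xxx`. -/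
noncomputable def Bco (lam T : ℝ) : ℝ → ℝ → ℝ := fun t x =>
  12 * l_x lam T t x * l_xx lam T t x - 4 * (l_x lam T t x)^3 - 4 * l_xxx lam T t x

/-- `D = −4 l_x`. -/
noncomputable def Dco (lam T : ℝ) : ℝ → ℝ → ℝ := fun t x => -4 * l_x lam T t x

/-- `Φ₁ = −6 l_xx`. -/
noncomputable def Phi1 (lam T : ℝ) : ℝ → ℝ → ℝ := fun t x => -6 * l_xx lam T t x

/-- `Φ = −8 l_x² l_xx`. -/
noncomputable def Phi (lam T : ℝ) : ℝ → ℝ → ℝ := fun t x =>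
  -8 * (l_x lam T t x)^2 * l_xx lam T t x

/-- `G − Φ₁`. -/
noncomputable def GmP1 (lam T : ℝ) : ℝ → ℝ → ℝ := fun t x =>
  Gco lam T t x - Phi1 lam T t x

/-- `B − (G − Φ₁)ₓ`. -/
noncomputable def BmGx (lam T : ℝ) : ℝ → ℝ → ℝ := fun t x =>
  Bco lam T t x - px (GmP1 lam T) t x

/-- `A − Φ`. -/
noncomputable def AmP (lam T : ℝ) : ℝ → ℝ → ℝ := fun t x =>
  Aco lam T t x - Phi lam T t x

/-- `F₄`, the coefficient `H₂` of `u²` in the Carleman identity. -/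
noncomputable def F4 (lam T : ℝ) : ℝ → ℝ → ℝ := fun t x =>
  -(px (fun t x => px (GmP1 lam T) t x * Phi lam T t x) t x)
    - px (fun t x => AmP lam T t x * BmGx lam T t x) t x
    + pt (pt (Phi lam T)) t x
    + px (px (fun t x => GmP1 lam T t x * Phi lam T t x)) t x
    + px (px (px (px (Phi lam T)))) t x
    + px (px (fun t x => AmP lam T t x * Phi1 lam T t x)) t x
    - px (px (px (fun t x => AmP lam T t x * Dco lam T t x))) t x
    + 2 * AmP lam T t x * Phi lam T t x
    + 2 * pt (fun t x => l_t lam T t x * AmP lam T t x) t x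

section ClosedForms

variable (lam T : ℝ)

lemma l_x_eq : l_x lam T = fun _ x => 2 * lam * x := by
  funext t x; conv_lhs => simp (disch := fun_prop) [l_x, px, lw]
  ring

lemma l_xx_eq : l_xx lam T = fun _ _ => 2 * lam := by
  funext t x; conv_lhs => simp (disch := fun_prop) [l_xx, px, lw]
  ring

lemma l_xxx_eq : l_xxx lam T = fun _ _ => 0 := by
  funext t x; simp (disch := fun_prop) [l_xxx, px, lw]

lemma l_xxxx_eq : l_xxxx lam T = fun _ _ => 0 := by
  funext t x; simp (disch := fun_prop) [l_xxxx, px, lw]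

lemma l_t_eq : l_t lam T = fun t _ => lam * (4 * t^3 - 6 * T * t^2 + 2 * T^2 * t) := by
  funext t x; conv_lhs => simp (disch := fun_prop) [l_t, pt, lw]
  ring

lemma l_tt_eq : l_tt lam T = fun t _ => lam * (12 * t^2 - 12 * T * t + 2 * T^2) := by
  funext t x; conv_lhs => simp (disch := fun_prop) [l_tt, pt, lw]
  ring

lemma Phi_eq : Phi lam T = fun _ x => -64 * lam^3 * x^2 := by
  funext t x; simp only [Phi, l_x_eq, l_xx_eq]; ring

lemma Phi1_eq : Phi1 lam T = fun _ _ => -12 * lam := by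
  funext t x; simp only [Phi1, l_xx_eq]; ring

lemma Dco_eq : Dco lam T = fun _ x => -8 * lam * x := by
  funext t x; simp only [Dco, l_x_eq]; ring

lemma GmP1_eq : GmP1 lam T = fun _ x => 24 * lam^2 * x^2 := by
  funext t x; simp only [GmP1, Gco, Phi1, l_x_eq, l_xx_eq]; ring

lemma BmGx_eq : BmGx lam T = fun _ x => -32 * lam^3 * x^3 := by
  funext t x
  conv_lhs => simp (disch := fun_prop) [BmGx, Bco, GmP1_eq, px, l_x_eq, l_xx_eq, l_xxx_eq]
  ring

lemma AmP_eq : AmP lam T = fun t x => 16 * lam^4 * x^4 + 16 * lam^3 * x^2 + 12 * lam^2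
    + lam^2 * (4 * t^3 - 6 * T * t^2 + 2 * T^2 * t)^2
    - lam * (12 * t^2 - 12 * T * t + 2 * T^2) := by
  funext t x
  simp only [AmP, Aco, Phi, l_x_eq, l_xx_eq, l_xxx_eq, l_xxxx_eq, l_t_eq, l_tt_eq]
  ring

end ClosedForms

def F4Remainder (T s t x : ℝ) : ℝ :=
  512 * x^4
    + s * (-4224 * x^2 - 32 * x^2 * (4 * t^3 - 6 * T * t^2 + 2 * T^2 * t)^2
      + 32 * x^4 * (12 * t^2 - 12 * T * t + 2 * T^2))
    + s^2 * (384 + 64 * x^2 * (12 * t^2 - 12 * T * t + 2 * T^2))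
    + s^3 * (24 + 6 * (4 * t^3 - 6 * T * t^2 + 2 * T^2 * t)^2) * (12 * t^2 - 12 * T * t + 2 * T^2)
    - s^4 * 2 * ((12 * t^2 - 12 * T * t + 2 * T^2)^2
      + (4 * t^3 - 6 * T * t^2 + 2 * T^2 * t) * (24 * t - 12 * T))

lemma F4_eq_leading_add_remainder {lam : ℝ} (hlam : lam ≠ 0) (T t x : ℝ) :
    F4 lam T t x = 1536 * lam^7 * x^6 + lam^6 * F4Remainder T lam⁻¹ t x := by
  conv_lhs =>
    simp only [F4, GmP1_eq, Phi_eq, Phi1_eq, Dco_eq, AmP_eq, BmGx_eq, l_t_eq]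
    simp (disch := fun_prop) [px, pt]
  simp only [F4Remainder]
  field_simp
  ring

lemma exists_abs_F4Remainder_le (T a b : ℝ) :
    ∃ M, ∀ s ∈ Set.Icc (0:ℝ) 1, ∀ t ∈ Set.Icc (0:ℝ) T, ∀ x ∈ Set.Icc a b,
      |F4Remainder T s t x| ≤ M := by
  have hbox : IsCompact (Set.Icc (0:ℝ) 1 ×ˢ Set.Icc (0:ℝ) T ×ˢ Set.Icc a b) :=
    isCompact_Icc.prod (isCompact_Icc.prod isCompact_Icc)
  obtain ⟨M, hM⟩ := hbox.exists_bound_of_continuousOn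
    (f := fun p : ℝ × ℝ × ℝ => F4Remainder T p.1 p.2.1 p.2.2) (by unfold F4Remainder; fun_prop)
  exact ⟨M, fun s hs t ht x hx => hM (s, t, x) ⟨hs, ht, hx⟩⟩

theorem coefficient_bound_F4_general (T a b : ℝ) (ha : 0 < a) :
    ∃ C > (0:ℝ), ∃ lam₀ > (0:ℝ), ∀ lam ≥ lam₀,
      ∀ t ∈ Set.Icc (0:ℝ) T, ∀ x ∈ Set.Icc a b,
        F4 lam T t x ≥ C * lam^7 := by
  obtain ⟨M, hM⟩ := exists_abs_F4Remainder_le T a b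
  refine ⟨768 * a^6, by positivity, max 1 (M / (768 * a^6)), by positivity, ?_⟩
  intro lam hlam t ht x hx
  have hlam1 : 1 ≤ lam := le_of_max_le_left hlam
  have hM_le : M ≤ 768 * a^6 * lam := (div_le_iff₀' (by positivity)).1 (le_of_max_le_right hlam)
  have hrem : -M ≤ F4Remainder T lam⁻¹ t x :=
    neg_le_of_abs_le (hM _ ⟨by positivity, inv_le_one_of_one_le₀ hlam1⟩ t ht x hx)
  rw [F4_eq_leading_add_remainder (by positivity)]
  calc 768 * a^6 * lam^7 = 1536 * lam^7 * a^6 + lam^6 * -(768 * a^6 * lam) := by ring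
    _ ≤ 1536 * lam^7 * x^6 + lam^6 * F4Remainder T lam⁻¹ t x := by
      gcongr
      · exact hx.1
      · linarith

/-- The coefficient `F₄ = H₂` of `u²` in the Carleman estimate is bounded below
by `C λ⁷` on `[0,T] × [a,b]` for `λ` large. -/
theorem coefficient_bound_F4 (T a b : ℝ) (hT : 0 < T) (ha : 0 < a) (hab : a ≤ b) :
    ∃ C > (0:ℝ), ∃ lam₀ > (0:ℝ), ∀ lam ≥ lam₀,
      ∀ t ∈ Set.Icc (0:ℝ) T, ∀ x ∈ Set.Icc a b,
        F4 lam T t x ≥ C * lam^7 :=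
  coefficient_bound_F4_general T a b ha
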